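/- Let 0 ≤ r < d/2, let f be a nonnegative continuous function of compact support on ℝ^d, u = G_r * f, and let e be a Borel set. Set A_j = {x ∈ e : u(x) ≥ 2^j} for j ∈ ℤ, and let μ_j be the capacitary (equilibrium) measure of A_j, i.e. supp(μ_j) ⊂ closure(A_j), G_r*(G_r*μ_j) ≥ 1 quasi-everywhere on A_j, G_r*(G_r*μ_j) ≤ 1 on supp(μ_j), and μ_j(ℝ^d) = cap(A_j; H^r). Then (3/4) ∑_{j∈ℤ} 2^{2j} μ_j(ℝ^d) ≤ ∫₀^∞ cap({x ∈ e : u(x) ≥ t}; H^r) d(t²) ≤ 3 ‖f‖_{L²} ‖∑_{j∈ℤ} 2^j (G_r * μ_j)‖_{L²}. -/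

import Mathlib

open MeasureTheory Real ENNReal
open NNReal

noncomputable section

abbrev Ed (d : ℕ) := EuclideanSpace ℝ (Fin d)

/-- Fourier transform `f̂(ξ) = ∫ f(x) e^{-2πi x·ξ} dx`. -/
def ft {d : ℕ} (f : Ed d → ℂ) (ξ : Ed d) : ℂ :=
  ∫ x, f x * Complex.exp (-(2 * (π : ℂ) * Complex.I) * ((∑ i, x i * ξ i : ℝ) : ℂ))

/-- Squared Sobolev `H^r` norm `‖(1-Δ)^{r/2} u‖_{L²}²`, via the Fourier transform. -/
def sobolevNormSq {d : ℕ} (r : ℝ) (u : Ed d → ℂ) : ℝ :=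
  ∫ ξ, (1 + 4 * π ^ 2 * ‖ξ‖ ^ 2) ^ r * ‖ft u ξ‖ ^ 2

/-- The Bessel kernel `G_r`, via the subordination formula;
its Fourier transform is `(1 + 4π²|ξ|²)^{-r/2}`. -/
def besselKernel (d : ℕ) (r : ℝ) (x : Ed d) : ℝ :=
  ((4 * π) ^ (-r / 2) / Real.Gamma (r / 2)) *
    ∫ t in Set.Ioi (0 : ℝ),
      Real.exp (-π * ‖x‖ ^ 2 / t) * Real.exp (-t / (4 * π)) * t ^ ((r - d) / 2) / t

/-- Bessel capacity `cap(e; H^r) = inf {‖u‖_{H^r}² : u ∈ C₀^∞, u ≥ 1 on e}`,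
with value `∞` when no competitor exists. -/
def besselCap (d : ℕ) (r : ℝ) (e : Set (Ed d)) : ℝ≥0∞ :=
  ⨅ (u : Ed d → ℝ) (_ : ContDiff ℝ (⊤ : ℕ∞) u) (_ : HasCompactSupport u)
    (_ : ∀ x ∈ e, 1 ≤ u x),
    ENNReal.ofReal (sobolevNormSq r (fun x => (u x : ℂ)))

/-- Bessel potential of a function: `G_r * f (x) = ∫ G_r(x - y) f(y) dy`. -/
def besselConv (d : ℕ) (r : ℝ) (f : Ed d → ℝ) (x : Ed d) : ℝ :=
  ∫ y, besselKernel d r (x - y) * f y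

/-- Bessel potential of a measure: `G_r * μ (x) = ∫ G_r(x - y) dμ(y)`. -/
def besselPot (d : ℕ) (r : ℝ) (μ : Measure (Ed d)) (x : Ed d) : ℝ≥0∞ :=
  ∫⁻ y, ENNReal.ofReal (besselKernel d r (x - y)) ∂μ

/-- Bessel potential of the function `G_r * μ`, i.e. `G_r * (G_r * μ)`. -/
def besselPot2 (d : ℕ) (r : ℝ) (μ : Measure (Ed d)) (x : Ed d) : ℝ≥0∞ :=
  ∫⁻ y, ENNReal.ofReal (besselKernel d r (x - y)) * besselPot d r μ y

/-- The (topological) support of a measure. -/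
def msupport {d : ℕ} (μ : Measure (Ed d)) : Set (Ed d) :=
  {x | ∀ U ∈ nhds x, 0 < μ U}

namespace Stmt7Aux

variable {d : ℕ} {r : ℝ}

lemma ofReal_int_le {α : Type*} [MeasurableSpace α] (μ : Measure α) (f : α → ℝ)
    (h0 : 0 ≤ᵐ[μ] f) :
    ENNReal.ofReal (∫ x, f x ∂μ) ≤ ∫⁻ x, ENNReal.ofReal (f x) ∂μ := by
  by_cases hf : Integrable f μ
  · exact le_of_eq (ofReal_integral_eq_lintegral_ofReal hf h0)
  · rw [integral_undef hf]; simp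

lemma measurable_FF : Measurable (fun p : Ed d × ℝ =>
    Real.exp (-π * ‖p.1‖ ^ 2 / p.2) * Real.exp (-p.2 / (4 * π)) * p.2 ^ ((r - d) / 2) / p.2) := by
  fun_prop

lemma measurable_besselKernel : Measurable (besselKernel d r) := by
  unfold besselKernel
  apply Measurable.const_mul
  exact (measurable_FF.stronglyMeasurable.integral_prod_right').measurable

lemma besselKernel_nonneg (hr0 : 0 ≤ r) (x : Ed d) : 0 ≤ besselKernel d r x := by
  apply mul_nonneg
  · apply div_nonneg (Real.rpow_nonneg (by positivity) _)
    exact Real.Gamma_nonneg_of_nonneg (by linarith)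
  · apply setIntegral_nonneg measurableSet_Ioi
    intro t ht
    have ht' : (0:ℝ) < t := ht
    positivity

lemma besselKernel_symm (x y : Ed d) :
    besselKernel d r (x - y) = besselKernel d r (y - x) := by
  unfold besselKernel; rw [norm_sub_rev]

lemma gaussian_integrable {b : ℝ} (hb : 0 < b) :
    Integrable (fun v : Ed d => Real.exp (-b * ‖v‖ ^ 2)) := by
  have hci := GaussianFourier.integrable_cexp_neg_mul_sq_norm_add
    (V := Ed d) (b := (b:ℂ)) (by simpa using hb) 0 0
  have h2 := hci.re
  refine h2.congr (Filter.Eventually.of_forall fun v => ?_)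
  simp only [zero_mul, add_zero]
  rw [show (-(b:ℂ) * (‖v‖:ℂ) ^ 2) = ((-b * ‖v‖^2 : ℝ) : ℂ) by push_cast; ring,
    RCLike.re_to_complex]
  exact Complex.exp_ofReal_re _

lemma gaussian_integral {b : ℝ} (hb : 0 < b) :
    ∫ v : Ed d, Real.exp (-b * ‖v‖ ^ 2) = (π / b) ^ ((d:ℝ) / 2) := by
  rw [GaussianFourier.integral_rexp_neg_mul_sq_norm hb]
  norm_num [finrank_euclideanSpace_fin]

lemma gamma_int (hrpos : 0 < r) :
    IntegrableOn (fun t : ℝ => Real.exp (-t / (4 * π)) * t ^ (r / 2 - 1)) (Set.Ioi 0) := by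
  have h1 : IntegrableOn (fun s : ℝ => Real.exp (-s) * s ^ (r / 2 - 1)) (Set.Ioi 0) :=
    Real.GammaIntegral_convergent (by positivity)
  have hc : (0:ℝ) < (4 * π)⁻¹ := by positivity
  have h2 : IntegrableOn (fun t : ℝ => Real.exp (-((4 * π)⁻¹ * t)) * ((4 * π)⁻¹ * t) ^ (r / 2 - 1))
      (Set.Ioi 0) := by
    have := (integrableOn_Ioi_comp_mul_left_iff
      (fun s : ℝ => Real.exp (-s) * s ^ (r / 2 - 1)) 0 hc).mpr
    simpa [mul_zero] using this (by simpa [mul_zero] using h1)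
  have h3 := h2.const_mul (((4 * π)⁻¹ : ℝ) ^ (r / 2 - 1))⁻¹
  refine IntegrableOn.congr_fun h3 (fun t ht => ?_) measurableSet_Ioi
  have ht' : (0:ℝ) < t := ht
  rw [Real.mul_rpow (by positivity) ht'.le]
  field_simp

lemma integrable_besselKernel (hr0 : 0 ≤ r) : Integrable (besselKernel d r) := by
  rcases eq_or_lt_of_le hr0 with h0 | hrpos
  · have hz : besselKernel d r = fun _ : Ed d => 0 := by
      funext x; unfold besselKernel
      rw [← h0]; norm_num [Real.Gamma_zero]
    rw [hz]; exact integrable_zero _ _ _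
  refine ⟨measurable_besselKernel.aestronglyMeasurable, ?_⟩
  rw [hasFiniteIntegral_iff_ofReal
    (Filter.Eventually.of_forall (besselKernel_nonneg hr0))]
  set c : ℝ := (4 * π) ^ (-r / 2) / Real.Gamma (r / 2) with hcdef
  have hc0 : 0 ≤ c := div_nonneg (Real.rpow_nonneg (by positivity) _)
    (Real.Gamma_nonneg_of_nonneg (by linarith))
  have key : ∀ x : Ed d, ENNReal.ofReal (besselKernel d r x) ≤
      ENNReal.ofReal c * ∫⁻ t in Set.Ioi (0:ℝ), ENNReal.ofReal
        (Real.exp (-π * ‖x‖ ^ 2 / t) * Real.exp (-t / (4 * π)) * t ^ ((r - d) / 2) / t) := by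
    intro x
    unfold besselKernel
    rw [ENNReal.ofReal_mul hc0]
    refine mul_le_mul_right ?_ _
    refine ofReal_int_le _ _ ?_
    refine (ae_restrict_iff' measurableSet_Ioi).2 (ae_of_all _ fun t ht => ?_)
    have ht' : (0:ℝ) < t := ht
    positivity
  calc ∫⁻ x, ENNReal.ofReal (besselKernel d r x)
      ≤ ∫⁻ x : Ed d, ENNReal.ofReal c * ∫⁻ t in Set.Ioi (0:ℝ), ENNReal.ofReal
          (Real.exp (-π * ‖x‖ ^ 2 / t) * Real.exp (-t / (4 * π)) * t ^ ((r - d) / 2) / t) :=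
        lintegral_mono key
    _ = ENNReal.ofReal c * ∫⁻ x : Ed d, ∫⁻ t in Set.Ioi (0:ℝ), ENNReal.ofReal
          (Real.exp (-π * ‖x‖ ^ 2 / t) * Real.exp (-t / (4 * π)) * t ^ ((r - d) / 2) / t) :=
        lintegral_const_mul' _ _ ENNReal.ofReal_ne_top
    _ = ENNReal.ofReal c * ∫⁻ t in Set.Ioi (0:ℝ), ∫⁻ x : Ed d, ENNReal.ofReal
          (Real.exp (-π * ‖x‖ ^ 2 / t) * Real.exp (-t / (4 * π)) * t ^ ((r - d) / 2) / t) := by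
        rw [lintegral_lintegral_swap (measurable_FF.ennreal_ofReal).aemeasurable]
    _ = ENNReal.ofReal c * ∫⁻ t in Set.Ioi (0:ℝ),
          ENNReal.ofReal (Real.exp (-t / (4 * π)) * t ^ (r / 2 - 1)) := by
        congr 1
        refine setLIntegral_congr_fun measurableSet_Ioi (fun t ht => ?_)
        have ht' : (0:ℝ) < t := ht
        have hπt : (0:ℝ) < π / t := by positivity
        have hk0 : (0:ℝ) ≤ Real.exp (-t / (4 * π)) * t ^ ((r - d) / 2) / t := by positivity
        have hsplit : ∀ x : Ed d,
            Real.exp (-π * ‖x‖ ^ 2 / t) * Real.exp (-t / (4 * π)) * t ^ ((r - d) / 2) / t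
              = Real.exp (-(π / t) * ‖x‖ ^ 2)
                * (Real.exp (-t / (4 * π)) * t ^ ((r - d) / 2) / t) := by
          intro x; rw [show -(π / t) * ‖x‖ ^ 2 = -π * ‖x‖ ^ 2 / t by ring]; ring
        simp only [hsplit]
        rw [lintegral_congr (fun x => ENNReal.ofReal_mul (Real.exp_pos _).le),
          lintegral_mul_const' _ _ ENNReal.ofReal_ne_top,
          ← ofReal_integral_eq_lintegral_ofReal (gaussian_integrable hπt)
            (ae_of_all _ fun x => (Real.exp_pos _).le),
          gaussian_integral hπt, ← ENNReal.ofReal_mul (by positivity)]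
        congr 1
        have hπ : π / (π / t) = t := by field_simp
        rw [hπ]
        have h1 : t ^ ((d:ℝ)/2) * t ^ ((r-(d:ℝ))/2) = t ^ (r/2) := by
          rw [← Real.rpow_add ht']; ring_nf
        calc t ^ ((d:ℝ)/2) * (Real.exp (-t / (4 * π)) * t ^ ((r-(d:ℝ))/2) / t)
            = Real.exp (-t / (4 * π)) * (t ^ ((d:ℝ)/2) * t ^ ((r-(d:ℝ))/2)) / t := by ring
          _ = Real.exp (-t / (4 * π)) * t ^ (r/2) / t := by rw [h1]
          _ = Real.exp (-t / (4 * π)) * t ^ (r/2 - 1) := by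
              rw [Real.rpow_sub ht', Real.rpow_one]; ring
    _ < ⊤ := by
        have hfin := (gamma_int hrpos).hasFiniteIntegral
        rw [hasFiniteIntegral_iff_ofReal ((ae_restrict_iff' measurableSet_Ioi).2
          (ae_of_all _ fun t ht => by
            have ht' : (0:ℝ) < t := ht
            positivity))] at hfin
        exact ENNReal.mul_lt_top ENNReal.ofReal_lt_top hfin

lemma besselCap_mono {s t : Set (Ed d)} (h : s ⊆ t) : besselCap d r s ≤ besselCap d r t :=
  le_iInf fun u => le_iInf fun h1 => le_iInf fun h2 => le_iInf fun h3 =>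
    iInf_le_of_le u (iInf_le_of_le h1 (iInf_le_of_le h2
      (iInf_le_of_le (fun x hx => h3 x (h hx)) le_rfl)))

lemma besselCap_lt_top_of_bounded {s : Set (Ed d)} {ρ : ℝ}
    (h : s ⊆ Metric.closedBall 0 ρ) : besselCap d r s < ⊤ := by
  have hρ : ρ ≤ |ρ| + 1 := by
    cases abs_cases ρ with
    | inl h => linarith [h.1]
    | inr h => linarith [h.1, abs_nonneg ρ]
  set B : ContDiffBump (0 : Ed d) := ⟨|ρ| + 1, |ρ| + 2, by positivity, by linarith⟩ with hB
  have hle : besselCap d r s ≤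
      ENNReal.ofReal (sobolevNormSq r (fun x => ((B x : ℝ) : ℂ))) := by
    refine iInf_le_of_le (fun x => B x) (iInf_le_of_le (B.contDiff) ?_)
    refine iInf_le_of_le B.hasCompactSupport ?_
    refine iInf_le_of_le (fun x hx => ?_) le_rfl
    have : x ∈ Metric.closedBall (0 : Ed d) (|ρ| + 1) :=
      Metric.closedBall_subset_closedBall (by linarith) (h hx)
    exact le_of_eq (B.one_of_mem_closedBall this).symm
  exact lt_of_le_of_lt hle ENNReal.ofReal_lt_top

lemma msupport_compl_null (μ : Measure (Ed d)) : μ (msupport μ)ᶜ = 0 := by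
  apply measure_null_of_locally_null
  intro x hx
  simp only [msupport, Set.mem_compl_iff, Set.mem_setOf_eq, not_forall] at hx
  obtain ⟨U, hU, hU0⟩ := hx
  exact ⟨U, nhdsWithin_le_nhds hU, nonpos_iff_eq_zero.mp (not_lt.mp hU0)⟩

lemma ofReal_zpow2 (j : ℤ) : ENNReal.ofReal ((2:ℝ) ^ j) = (2 : ℝ≥0∞) ^ j := by
  have h1 : ((2 ^ j : ℝ≥0) : ℝ≥0∞) = (2 : ℝ≥0∞) ^ j := ENNReal.coe_zpow (by norm_num) j
  have h2 : (2:ℝ) ^ j = (((2 ^ j : ℝ≥0)) : ℝ) := by push_cast; ring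
  rw [h2, ENNReal.ofReal_coe_nnreal, h1]

lemma dyadic_partition : Set.Ioi (0:ℝ) = ⋃ n : ℤ, Set.Ioc ((2:ℝ) ^ n) (2 ^ (n + 1)) := by
  ext t
  simp only [Set.mem_Ioi, Set.mem_iUnion]
  constructor
  · intro ht
    exact exists_mem_Ioc_zpow ht one_lt_two
  · rintro ⟨n, hn⟩
    exact lt_trans (zpow_pos (by norm_num) n) hn.1

lemma dyadic_disjoint :
    Pairwise (Function.onFun Disjoint fun n : ℤ => Set.Ioc ((2:ℝ) ^ n) (2 ^ (n + 1))) := by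
  intro m n hmn
  have key : ∀ a b : ℤ, a < b →
      Disjoint (Set.Ioc ((2:ℝ) ^ a) (2 ^ (a+1))) (Set.Ioc ((2:ℝ) ^ b) (2 ^ (b+1))) := by
    intro a b hab
    rw [Set.Ioc_disjoint_Ioc]
    have : (2:ℝ) ^ (a+1) ≤ 2 ^ b := zpow_le_zpow_right₀ one_le_two (by omega)
    calc min ((2:ℝ)^(a+1)) (2^(b+1)) ≤ (2:ℝ)^(a+1) := min_le_left _ _
      _ ≤ max ((2:ℝ)^a) (2^b) := le_trans this (le_max_right _ _)
  rcases hmn.lt_or_gt with h | h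
  · exact key m n h
  · exact (key n m h).symm

lemma lint_Ioc_twot {a b : ℝ} (ha : 0 < a) (hab : a ≤ b) :
    ∫⁻ t in Set.Ioc a b, ENNReal.ofReal (2 * t) = ENNReal.ofReal (b^2 - a^2) := by
  rw [← ofReal_integral_eq_lintegral_ofReal
    (Continuous.integrableOn_Ioc (by fun_prop : Continuous fun t : ℝ => 2 * t))
    ((ae_restrict_iff' measurableSet_Ioc).2 (ae_of_all _ fun t ht => by
      have := ht.1; simp only [Pi.zero_apply]; nlinarith))]
  congr 1
  rw [← intervalIntegral.integral_of_le hab]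
  rw [intervalIntegral.integral_const_mul]
  simp only [integral_id]
  ring

lemma pow_two_real (n : ℤ) : (2:ℝ) ^ (2*n) = (2:ℝ)^n * (2:ℝ)^n := by
  rw [show 2*n = n + n from two_mul n, zpow_add₀ (two_ne_zero)]

end Stmt7Aux

open Stmt7Aux in
/-- Let `0 ≤ r < d/2`, `f ≥ 0` continuous with compact support,
`u = G_r * f`, `e` a Borel set, `A_j = {x ∈ e : u(x) ≥ 2^j}`, and let `μ_j` be the
capacitary measure of `A_j` (support in `closure A_j`, potential `≥ 1` q.e. on `A_j`,
potential `≤ 1` on `supp μ_j`, total mass `cap(A_j; H^r)`). Then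
`(3/4) ∑_j 2^{2j} ‖μ_j‖ ≤ ∫₀^∞ cap({x ∈ e : u ≥ t}; H^r) d(t²)
  ≤ 3 ‖f‖_{L²} ‖∑_j 2^j (G_r * μ_j)‖_{L²}`. -/
theorem stmt_7 (d : ℕ) (hd : 0 < d) (r : ℝ) (hr0 : 0 ≤ r) (hr : r < d / 2)
    (f : Ed d → ℝ) (hfc : Continuous f) (hfs : HasCompactSupport f)
    (hf0 : ∀ x, 0 ≤ f x) (e : Set (Ed d)) (he : MeasurableSet e)
    (μ : ℤ → Measure (Ed d))
    (hsupp : ∀ j : ℤ,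
      msupport (μ j) ⊆ closure {x ∈ e | (2 : ℝ) ^ j ≤ besselConv d r f x})
    (hqe : ∀ j : ℤ, besselCap d r
      {x ∈ e | (2 : ℝ) ^ j ≤ besselConv d r f x ∧ besselPot2 d r (μ j) x < 1} = 0)
    (hle1 : ∀ j : ℤ, ∀ x ∈ msupport (μ j), besselPot2 d r (μ j) x ≤ 1)
    (hmass : ∀ j : ℤ,
      μ j Set.univ = besselCap d r {x ∈ e | (2 : ℝ) ^ j ≤ besselConv d r f x}) :
    ENNReal.ofReal (3 / 4) * (∑' j : ℤ, (2 : ℝ≥0∞) ^ (2 * j) * μ j Set.univ) ≤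
      (∫⁻ t in Set.Ioi (0 : ℝ),
        besselCap d r {x ∈ e | t ≤ besselConv d r f x} * ENNReal.ofReal (2 * t)) ∧
    (∫⁻ t in Set.Ioi (0 : ℝ),
        besselCap d r {x ∈ e | t ≤ besselConv d r f x} * ENNReal.ofReal (2 * t)) ≤
      3 * eLpNorm f 2 volume *
        (∫⁻ x, (∑' j : ℤ, (2 : ℝ≥0∞) ^ j * besselPot d r (μ j) x) ^ 2) ^ (1 / 2 : ℝ) := by
  have hGnn : ∀ x : Ed d, 0 ≤ besselKernel d r x := besselKernel_nonneg hr0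
  have hGint : Integrable (besselKernel d r) := integrable_besselKernel hr0
  -- continuity of the potential u = G_r * f
  have hu_cont : Continuous (besselConv d r f) := by
    have h := hfs.continuous_convolution_left (ContinuousLinearMap.mul ℝ ℝ) hfc
      hGint.locallyIntegrable
    have h2 : Continuous (fun x : Ed d => ∫ y, besselKernel d r (x - y) * f y) := by
      convert h using 2 with x
      rw [convolution]
      congr 1
      ext y
      simp [mul_comm]
    exact h2
  -- capacities of the dyadic sets are finite
  have hcapfin : ∀ c : ℝ, 0 < c →
      besselCap d r {x ∈ e | c ≤ besselConv d r f x} < ⊤ := by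
    intro c hc
    obtain ⟨M, hM⟩ : ∃ M : ℝ, ∀ y, f y ≤ M := by
      obtain ⟨C, hC⟩ := hfs.exists_bound_of_continuous hfc
      exact ⟨C, fun y => (le_abs_self _).trans (by simpa using hC y)⟩
    have hM0 : 0 ≤ M := le_trans (hf0 0) (hM 0)
    obtain ⟨R, hR⟩ : ∃ R : ℝ, Function.support f ⊆ Metric.closedBall 0 R := by
      obtain ⟨R, hR⟩ := hfs.isBounded.subset_closedBall 0
      exact ⟨R, subset_trans subset_closure hR⟩
    have htail : ∀ ε : ℝ, 0 < ε → ∃ n : ℕ,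
        ∫ z in (Metric.closedBall (0 : Ed d) n)ᶜ, besselKernel d r z < ε := by
      intro ε hε
      have hmono : Monotone fun n : ℕ => Metric.closedBall (0 : Ed d) n := fun a b hab =>
        Metric.closedBall_subset_closedBall (by exact_mod_cast hab)
      have hten : Filter.Tendsto
          (fun n : ℕ => ∫ z in Metric.closedBall (0 : Ed d) n, besselKernel d r z)
          Filter.atTop (nhds (∫ z, besselKernel d r z)) := by
        have := tendsto_setIntegral_of_monotone (fun n : ℕ => measurableSet_closedBall) hmono
          (by rw [Metric.iUnion_closedBall_nat]; exact hGint.integrableOn)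
        rwa [Metric.iUnion_closedBall_nat, setIntegral_univ] at this
      obtain ⟨n, hn⟩ := (hten.eventually (eventually_gt_nhds
        (show (∫ z, besselKernel d r z) - ε < ∫ z, besselKernel d r z by linarith))).exists
      refine ⟨n, ?_⟩
      have hsplit : (∫ z in Metric.closedBall (0 : Ed d) n, besselKernel d r z) +
          (∫ z in (Metric.closedBall (0 : Ed d) n)ᶜ, besselKernel d r z)
            = ∫ z, besselKernel d r z :=
        integral_add_compl measurableSet_closedBall hGint
      linarith
    obtain ⟨n, hn⟩ := htail (c / (M + 1)) (by positivity)
    have hsubset : {x ∈ e | c ≤ besselConv d r f x} ⊆ Metric.closedBall 0 (R + n) := by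
      intro x hx
      obtain ⟨-, hx⟩ := hx
      by_contra hout
      have hxn : R + (n:ℝ) < ‖x‖ := by
        simp only [Metric.mem_closedBall, dist_zero_right, not_le] at hout
        exact hout
      set H : Ed d → ℝ := (Metric.closedBall (0 : Ed d) n)ᶜ.indicator (besselKernel d r)
        with hHdef
      have hHint : Integrable H := hGint.indicator measurableSet_closedBall.compl
      have hHnn : ∀ z, 0 ≤ H z := fun z => Set.indicator_nonneg (fun z _ => hGnn z) z
      have hbound : ∀ y, besselKernel d r (x - y) * f y ≤ M * H (x - y) := by
        intro y
        by_cases hy : f y = 0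
        · rw [hy, mul_zero]
          exact mul_nonneg hM0 (hHnn _)
        · have hy' : y ∈ Metric.closedBall (0 : Ed d) R := hR hy
          have hyR : ‖y‖ ≤ R := by simpa [dist_zero_right] using hy'
          have hxy : (n:ℝ) < ‖x - y‖ := by
            linarith [norm_sub_norm_le x y]
          have hHeq : H (x - y) = besselKernel d r (x - y) := by
            apply Set.indicator_of_mem
            simp only [Set.mem_compl_iff, Metric.mem_closedBall, dist_zero_right, not_le]
            exact hxy
          rw [hHeq, mul_comm M]
          exact mul_le_mul_of_nonneg_left (hM y) (hGnn _)
      have hconv_le : besselConv d r f x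
          ≤ M * ∫ z in (Metric.closedBall (0 : Ed d) n)ᶜ, besselKernel d r z := by
        have h1 : besselConv d r f x ≤ ∫ y, M * H (x - y) := by
          refine integral_mono_of_nonneg (ae_of_all _ fun y => mul_nonneg (hGnn _) (hf0 y))
            ((hHint.comp_sub_left x).const_mul M) (ae_of_all _ hbound)
        rw [integral_const_mul, integral_sub_left_eq_self H volume x] at h1
        rwa [integral_indicator measurableSet_closedBall.compl] at h1
      have hlt : M * ∫ z in (Metric.closedBall (0 : Ed d) n)ᶜ, besselKernel d r z < c := by
        calc M * ∫ z in (Metric.closedBall (0 : Ed d) n)ᶜ, besselKernel d r z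
            ≤ M * (c / (M+1)) := mul_le_mul_of_nonneg_left hn.le hM0
          _ < c := by
              rw [mul_div_assoc', div_lt_iff₀ (by positivity)]
              nlinarith
      linarith
    exact besselCap_lt_top_of_bounded hsubset
  have hfinμ : ∀ j : ℤ, IsFiniteMeasure (μ j) := fun j =>
    ⟨by rw [hmass j]; exact hcapfin _ (zpow_pos (by norm_num) j)⟩
  -- partition of (0,∞) into dyadic intervals
  have hpart : ∀ φ : ℝ → ℝ≥0∞, ∫⁻ t in Set.Ioi (0:ℝ), φ t
      = ∑' n : ℤ, ∫⁻ t in Set.Ioc ((2:ℝ) ^ n) (2 ^ (n + 1)), φ t := by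
    intro φ
    rw [dyadic_partition, lintegral_iUnion (fun n => measurableSet_Ioc) dyadic_disjoint]
  have hm2t : Measurable fun t : ℝ => ENNReal.ofReal (2 * t) :=
    (measurable_const.mul measurable_id).ennreal_ofReal
  constructor
  · -- LEFT INEQUALITY
    rw [hpart _, ← ENNReal.tsum_mul_left,
      ← (Equiv.addRight (1:ℤ)).tsum_eq
        (fun j => ENNReal.ofReal (3/4) * ((2:ℝ≥0∞)^(2*j) * μ j Set.univ))]
    simp only [Equiv.coe_addRight]
    refine ENNReal.tsum_le_tsum fun n => ?_
    have ha : (0:ℝ) < 2^n := zpow_pos (by norm_num) n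
    have hab : (2:ℝ)^n ≤ 2^(n+1) := zpow_le_zpow_right₀ one_le_two (by omega)
    have hreal : (3:ℝ)/4 * 2^(2*(n+1)) = ((2:ℝ)^(n+1))^2 - ((2:ℝ)^n)^2 := by
      have e1 : (2:ℝ)^(n+1) = 2^n * 2 := zpow_add_one₀ two_ne_zero n
      rw [pow_two_real, e1]; ring
    have heq1 : ENNReal.ofReal (3/4) * ((2:ℝ≥0∞)^(2*(n+1)) * μ (n+1) Set.univ)
        = besselCap d r {x ∈ e | (2:ℝ)^(n+1) ≤ besselConv d r f x}
            * ENNReal.ofReal (((2:ℝ)^(n+1))^2 - ((2:ℝ)^n)^2) := by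
      rw [← ofReal_zpow2 (2*(n+1)), ← mul_assoc,
        ← ENNReal.ofReal_mul (by norm_num), hreal, mul_comm, ← hmass (n+1)]
    rw [heq1]
    have h1 : besselCap d r {x ∈ e | (2:ℝ)^(n+1) ≤ besselConv d r f x}
          * ENNReal.ofReal (((2:ℝ)^(n+1))^2 - ((2:ℝ)^n)^2)
        = ∫⁻ t in Set.Ioc ((2:ℝ)^n) (2^(n+1)),
            besselCap d r {x ∈ e | (2:ℝ)^(n+1) ≤ besselConv d r f x}
              * ENNReal.ofReal (2*t) := by
      rw [lintegral_const_mul _ hm2t, lint_Ioc_twot ha hab]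
    rw [h1]
    refine lintegral_mono_ae ((ae_restrict_iff' measurableSet_Ioc).2
      (ae_of_all _ fun t ht => ?_))
    refine mul_le_mul_left (besselCap_mono fun x hx => ?_) _
    exact ⟨hx.1, le_trans ht.2 hx.2⟩
  · -- RIGHT INEQUALITY
    have hPotMeas : ∀ n : ℤ, Measurable (besselPot d r (μ n)) := by
      intro n
      haveI := hfinμ n
      exact Measurable.lintegral_prod_right
        ((measurable_besselKernel.comp (measurable_fst.sub measurable_snd)).ennreal_ofReal)
    -- key pointwise-in-j estimate
    have key1 : ∀ n : ℤ, ENNReal.ofReal ((2:ℝ)^n) * μ n Set.univ ≤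
        ∫⁻ y, ENNReal.ofReal (f y) * besselPot d r (μ n) y := by
      intro n
      haveI := hfinμ n
      have hclosed : IsClosed {x : Ed d | (2:ℝ)^n ≤ besselConv d r f x} :=
        isClosed_le continuous_const hu_cont
      have hsub : msupport (μ n) ⊆ {x : Ed d | (2:ℝ)^n ≤ besselConv d r f x} := by
        refine subset_trans (hsupp n) ?_
        rw [← hclosed.closure_eq]
        exact closure_mono (fun x hx => hx.2)
      have hae : ∀ᵐ x ∂(μ n),
          ENNReal.ofReal ((2:ℝ)^n) ≤ ENNReal.ofReal (besselConv d r f x) := by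
        refine ae_iff.mpr (measure_mono_null ?_ (msupport_compl_null (μ n)))
        intro x hx
        simp only [Set.mem_setOf_eq, not_le] at hx
        intro hmem
        exact absurd (ENNReal.ofReal_le_ofReal (hsub hmem)) (not_le.mpr hx)
      have hswapmeas : Measurable (Function.uncurry fun (x : Ed d) (y : Ed d) =>
          ENNReal.ofReal (besselKernel d r (x - y)) * ENNReal.ofReal (f y)) :=
        ((measurable_besselKernel.comp (measurable_fst.sub measurable_snd)).ennreal_ofReal).mul
          ((hfc.measurable.comp measurable_snd).ennreal_ofReal)
      calc ENNReal.ofReal ((2:ℝ)^n) * μ n Set.univ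
          = ∫⁻ _x, ENNReal.ofReal ((2:ℝ)^n) ∂(μ n) := (lintegral_const _).symm
        _ ≤ ∫⁻ x, ENNReal.ofReal (besselConv d r f x) ∂(μ n) := lintegral_mono_ae hae
        _ ≤ ∫⁻ x, (∫⁻ y, ENNReal.ofReal (besselKernel d r (x-y)) * ENNReal.ofReal (f y)) ∂(μ n) := by
            refine lintegral_mono fun x => ?_
            refine le_trans (ofReal_int_le volume _
              (ae_of_all _ fun y => mul_nonneg (hGnn _) (hf0 y))) ?_
            exact le_of_eq (lintegral_congr fun y => ENNReal.ofReal_mul (hGnn _))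
        _ = ∫⁻ y, (∫⁻ x, ENNReal.ofReal (besselKernel d r (x-y)) * ENNReal.ofReal (f y) ∂(μ n)) := by
            rw [lintegral_lintegral_swap hswapmeas.aemeasurable]
        _ = ∫⁻ y, ENNReal.ofReal (f y) * besselPot d r (μ n) y := by
            refine lintegral_congr fun y => ?_
            rw [lintegral_mul_const' _ _ ENNReal.ofReal_ne_top, mul_comm]
            congr 1
            exact lintegral_congr fun x => by rw [besselKernel_symm]
    rw [hpart _]
    have step1 : (∑' n : ℤ, ∫⁻ t in Set.Ioc ((2:ℝ)^n) (2^(n+1)),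
          besselCap d r {x ∈ e | t ≤ besselConv d r f x} * ENNReal.ofReal (2*t))
        ≤ ∑' n : ℤ, μ n Set.univ * ENNReal.ofReal (3 * (2:ℝ)^(2*n)) := by
      refine ENNReal.tsum_le_tsum fun n => ?_
      have ha : (0:ℝ) < 2^n := zpow_pos (by norm_num) n
      have hab : (2:ℝ)^n ≤ 2^(n+1) := zpow_le_zpow_right₀ one_le_two (by omega)
      have hb : (∫⁻ t in Set.Ioc ((2:ℝ)^n) (2^(n+1)),
            besselCap d r {x ∈ e | t ≤ besselConv d r f x} * ENNReal.ofReal (2*t))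
          ≤ ∫⁻ t in Set.Ioc ((2:ℝ)^n) (2^(n+1)),
            besselCap d r {x ∈ e | (2:ℝ)^n ≤ besselConv d r f x} * ENNReal.ofReal (2*t) := by
        refine lintegral_mono_ae ((ae_restrict_iff' measurableSet_Ioc).2
          (ae_of_all _ fun t ht => ?_))
        refine mul_le_mul_left (besselCap_mono fun x hx => ?_) _
        exact ⟨hx.1, le_trans ht.1.le hx.2⟩
      refine le_trans hb ?_
      rw [lintegral_const_mul _ hm2t, lint_Ioc_twot ha hab, ← hmass n]
      refine mul_le_mul_right (le_of_eq ?_) _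
      congr 1
      have e1 : (2:ℝ)^(n+1) = 2^n * 2 := zpow_add_one₀ two_ne_zero n
      rw [pow_two_real, e1]; ring
    refine le_trans step1 ?_
    have step2 : (∑' n : ℤ, μ n Set.univ * ENNReal.ofReal (3 * (2:ℝ)^(2*n)))
        = 3 * ∑' n : ℤ, ENNReal.ofReal ((2:ℝ)^n)
            * (ENNReal.ofReal ((2:ℝ)^n) * μ n Set.univ) := by
      rw [← ENNReal.tsum_mul_left]
      refine tsum_congr fun n => ?_
      rw [pow_two_real,
        ENNReal.ofReal_mul (by norm_num : (0:ℝ) ≤ 3),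
        ENNReal.ofReal_mul (by positivity : (0:ℝ) ≤ (2:ℝ)^n),
        show ENNReal.ofReal (3:ℝ) = 3 by simp]
      ring
    rw [step2]
    have step3 : (∑' n : ℤ, ENNReal.ofReal ((2:ℝ)^n)
          * (ENNReal.ofReal ((2:ℝ)^n) * μ n Set.univ))
        ≤ ∫⁻ y, ENNReal.ofReal (f y)
            * ∑' n : ℤ, ENNReal.ofReal ((2:ℝ)^n) * besselPot d r (μ n) y := by
      calc (∑' n : ℤ, ENNReal.ofReal ((2:ℝ)^n) * (ENNReal.ofReal ((2:ℝ)^n) * μ n Set.univ))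
          ≤ ∑' n : ℤ, ENNReal.ofReal ((2:ℝ)^n)
              * ∫⁻ y, ENNReal.ofReal (f y) * besselPot d r (μ n) y :=
            ENNReal.tsum_le_tsum fun n => mul_le_mul_right (key1 n) _
        _ = ∑' n : ℤ, ∫⁻ y, ENNReal.ofReal (f y)
              * (ENNReal.ofReal ((2:ℝ)^n) * besselPot d r (μ n) y) := by
            refine tsum_congr fun n => ?_
            rw [← lintegral_const_mul' _ _ ENNReal.ofReal_ne_top]
            exact lintegral_congr fun y => by ring
        _ = ∫⁻ y, ∑' n : ℤ, ENNReal.ofReal (f y)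
              * (ENNReal.ofReal ((2:ℝ)^n) * besselPot d r (μ n) y) := by
            refine (lintegral_tsum fun n => ?_).symm
            exact ((hfc.measurable.ennreal_ofReal).mul
              (measurable_const.mul (hPotMeas n))).aemeasurable
        _ = ∫⁻ y, ENNReal.ofReal (f y)
              * ∑' n : ℤ, ENNReal.ofReal ((2:ℝ)^n) * besselPot d r (μ n) y := by
            exact lintegral_congr fun y => ENNReal.tsum_mul_left
    have hGmeas : Measurable fun y : Ed d =>
        ∑' n : ℤ, ENNReal.ofReal ((2:ℝ)^n) * besselPot d r (μ n) y :=
      Measurable.ennreal_tsum fun n => measurable_const.mul (hPotMeas n)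
    have step4 : (∫⁻ y, ENNReal.ofReal (f y)
          * ∑' n : ℤ, ENNReal.ofReal ((2:ℝ)^n) * besselPot d r (μ n) y)
        ≤ (∫⁻ y, ENNReal.ofReal (f y) ^ (2:ℝ)) ^ (1/2:ℝ)
          * (∫⁻ y, (∑' n : ℤ, ENNReal.ofReal ((2:ℝ)^n) * besselPot d r (μ n) y) ^ (2:ℝ))
              ^ (1/2:ℝ) := by
      have hconj : Real.HolderConjugate 2 2 := ⟨by norm_num, by norm_num, by norm_num⟩
      exact ENNReal.lintegral_mul_le_Lp_mul_Lq volume hconj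
        (hfc.measurable.ennreal_ofReal.aemeasurable) hGmeas.aemeasurable
    have heLp : (∫⁻ y, ENNReal.ofReal (f y) ^ (2:ℝ)) ^ (1/2:ℝ) = eLpNorm f 2 volume := by
      rw [eLpNorm_eq_lintegral_rpow_enorm_toReal two_ne_zero ENNReal.ofNat_ne_top]
      simp only [ENNReal.toReal_ofNat]
      congr 1
      exact lintegral_congr fun y => by rw [Real.enorm_eq_ofReal (hf0 y)]
    have hsq : ∀ a : ℝ≥0∞, a ^ (2:ℝ) = a ^ (2:ℕ) := fun a => by
      rw [← ENNReal.rpow_natCast a 2]; norm_num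
    have hfactor : (∫⁻ y, (∑' n : ℤ, ENNReal.ofReal ((2:ℝ)^n) * besselPot d r (μ n) y) ^ (2:ℝ))
          ^ (1/2:ℝ)
        = (∫⁻ x, (∑' j : ℤ, (2 : ℝ≥0∞) ^ j * besselPot d r (μ j) x) ^ 2) ^ (1/2:ℝ) := by
      congr 1
      refine lintegral_congr fun y => ?_
      rw [hsq]
      congr 1
      exact tsum_congr fun n => by rw [ofReal_zpow2]
    calc 3 * ∑' n : ℤ, ENNReal.ofReal ((2:ℝ)^n) * (ENNReal.ofReal ((2:ℝ)^n) * μ n Set.univ)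
        ≤ 3 * ((∫⁻ y, ENNReal.ofReal (f y) ^ (2:ℝ)) ^ (1/2:ℝ)
            * (∫⁻ y, (∑' n : ℤ, ENNReal.ofReal ((2:ℝ)^n) * besselPot d r (μ n) y) ^ (2:ℝ))
                ^ (1/2:ℝ)) :=
          mul_le_mul_right (le_trans step3 step4) _
      _ = 3 * eLpNorm f 2 volume *
            (∫⁻ x, (∑' j : ℤ, (2 : ℝ≥0∞) ^ j * besselPot d r (μ j) x) ^ 2) ^ (1/2:ℝ) := by
          rw [heLp, hfactor, mul_assoc]

end
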